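/- For any real numbers 0 < a ≤ b ≤ c with c² < a² + b², there exist real numbers 0 < k ≤ l ≤ m such that 2√(k²+l²) = a, 2√(k²+m²) = b, and 2√(l²+m²) = c. -/
import Mathlib


/-- every acute triangle with side lengths `0 < a ≤ b ≤ c`, `c² < a² + b²`,
arises from parameters `0 < k ≤ l ≤ m` via `a = 2√(k²+l²)`, `b = 2√(k²+m²)`, `c = 2√(l²+m²)`. -/
theorem stmt_4 (a b c : ℝ) (ha : 0 < a) (hab : a ≤ b) (hbc : b ≤ c)
    (hacute : c ^ 2 < a ^ 2 + b ^ 2) :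
    ∃ k l m : ℝ, 0 < k ∧ k ≤ l ∧ l ≤ m ∧
      2 * Real.sqrt (k ^ 2 + l ^ 2) = a ∧
      2 * Real.sqrt (k ^ 2 + m ^ 2) = b ∧
      2 * Real.sqrt (l ^ 2 + m ^ 2) = c := by
  have hb : 0 < b := lt_of_lt_of_le ha hab
  have hc : 0 < c := lt_of_lt_of_le hb hbc
  have hK : (0:ℝ) < (a^2 + b^2 - c^2)/8 := by nlinarith
  have hL : (0:ℝ) < (a^2 + c^2 - b^2)/8 := by nlinarith
  have hM : (0:ℝ) < (b^2 + c^2 - a^2)/8 := by nlinarith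
  have key : ∀ x : ℝ, 0 < x → 2 * Real.sqrt ((x/2)^2) = x := fun x hx => by
    rw [Real.sqrt_sq (by linarith)]; ring
  refine ⟨Real.sqrt ((a^2 + b^2 - c^2)/8), Real.sqrt ((a^2 + c^2 - b^2)/8),
    Real.sqrt ((b^2 + c^2 - a^2)/8), Real.sqrt_pos.mpr hK,
    Real.sqrt_le_sqrt (by nlinarith), Real.sqrt_le_sqrt (by nlinarith), ?_, ?_, ?_⟩
  · rw [Real.sq_sqrt hK.le, Real.sq_sqrt hL.le,
      show ((a^2+b^2-c^2)/8 + (a^2+c^2-b^2)/8) = (a/2)^2 by ring]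
    exact key a ha
  · rw [Real.sq_sqrt hK.le, Real.sq_sqrt hM.le,
      show ((a^2+b^2-c^2)/8 + (b^2+c^2-a^2)/8) = (b/2)^2 by ring]
    exact key b hb
  · rw [Real.sq_sqrt hL.le, Real.sq_sqrt hM.le,
      show ((a^2+c^2-b^2)/8 + (b^2+c^2-a^2)/8) = (c/2)^2 by ring]
    exact key c hc
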